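/- Let N ≥ 4 be an integer divisible by 4. Then ∑_{s=1}^{N/4} 1/sin²((2s−1)π/N) = N²/8. -/

import Mathlib

/-!
Put `θₖ = (2k+1)π/(2m)` and `ζₖ = exp(2iθₖ)`, so that `ζ₀, …, ζₘ₋₁` are the roots of `X^m = -1`.
From `4 ζ sin² θ = -(1 - ζ)²` and `(1 - ζ) ∑_{j<m} ζ^j = 1 - ζ^m = 2` we get
`1 / sin² θₖ = -ζₖ (∑_{j<m} ζₖ^j)² = -∑_{j,l<m} ζₖ^(j+l+1)`.
Summed over `k`, the power sum `∑ₖ ζₖ^e` vanishes for `0 < e < 2m`, `e ≠ m`, and equals `-m` for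
`e = m`; exactly `m` pairs `(j, l)` have `j + l + 1 = m`, so `∑_{k<m} 1 / sin² θₖ = m²`.
For `N = 4n` take `m = 2n`: the terms are symmetric under `k ↦ 2n - 1 - k`, so the first half of the
sum is `(2n)² / 2 = N² / 8`.
-/

open Finset

namespace IsPrimitiveRoot

variable {R : Type*} [CommRing R] [IsDomain R] {ω : R} {m : ℕ}

theorem sum_pow_odd_pow_eq_zero (hω : IsPrimitiveRoot ω (2 * m)) {e : ℕ} (he : ¬ m ∣ e) :
    ∑ k ∈ range m, (ω ^ (2 * k + 1)) ^ e = 0 := by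
  have hne : ω ^ (2 * e) ≠ 1 := by
    rwa [Ne, hω.pow_eq_one_iff_dvd, Nat.mul_dvd_mul_iff_left two_pos]
  have hpow : (ω ^ (2 * e)) ^ m = 1 := by
    rw [← pow_mul, mul_right_comm, pow_mul, hω.pow_eq_one, one_pow]
  have hgeom : ∑ k ∈ range m, (ω ^ (2 * e)) ^ k = 0 := by
    have h := mul_neg_geom_sum (ω ^ (2 * e)) m
    rw [hpow, sub_self] at h
    exact (mul_eq_zero.mp h).resolve_left (sub_ne_zero.mpr hne.symm)
  calc ∑ k ∈ range m, (ω ^ (2 * k + 1)) ^ e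
      = ω ^ e * ∑ k ∈ range m, (ω ^ (2 * e)) ^ k := by
        rw [mul_sum]; exact sum_congr rfl fun k _ => by ring
    _ = 0 := by rw [hgeom, mul_zero]

theorem pow_odd_pow_half (hω : IsPrimitiveRoot ω (2 * m)) (hm : m ≠ 0) (k : ℕ) :
    (ω ^ (2 * k + 1)) ^ m = -1 := by
  have h2 : IsPrimitiveRoot (ω ^ m) 2 := by
    simpa [hm] using hω.pow_of_dvd hm (dvd_mul_left m 2)
  rw [← pow_mul, mul_comm, pow_mul, h2.eq_neg_one_of_two_right,
    (odd_two_mul_add_one k).neg_one_pow]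

theorem sum_pow_odd_pow_add_add_one (hω : IsPrimitiveRoot ω (2 * m)) {j l : ℕ} (hj : j < m)
    (hl : l < m) :
    ∑ k ∈ range m, (ω ^ (2 * k + 1)) ^ (j + l + 1) = if l = m - 1 - j then -(m : R) else 0 := by
  split_ifs with hjl
  · have he : j + l + 1 = m := by omega
    simp [he, hω.pow_odd_pow_half (by omega : m ≠ 0)]
  · refine hω.sum_pow_odd_pow_eq_zero fun hdvd => hjl ?_
    have := Nat.eq_of_dvd_of_lt_two_mul (by omega) hdvd (by omega)
    omega

theorem sum_neg_mul_geom_sum_sq (hω : IsPrimitiveRoot ω (2 * m)) :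
    ∑ k ∈ range m, -(ω ^ (2 * k + 1) * (∑ j ∈ range m, (ω ^ (2 * k + 1)) ^ j) ^ 2)
      = (m : R) ^ 2 := by
  have hexpand : ∀ ζ : R, ζ * (∑ j ∈ range m, ζ ^ j) ^ 2
      = ∑ j ∈ range m, ∑ l ∈ range m, ζ ^ (j + l + 1) := fun ζ => by
    rw [sq, sum_mul_sum, mul_sum]
    exact sum_congr rfl fun _ _ => by rw [mul_sum]; exact sum_congr rfl fun _ _ => by ring
  simp only [hexpand, sum_neg_distrib]
  rw [sum_comm]
  calc -∑ j ∈ range m, ∑ k ∈ range m, ∑ l ∈ range m, (ω ^ (2 * k + 1)) ^ (j + l + 1)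
      = -∑ j ∈ range m, ∑ l ∈ range m, if l = m - 1 - j then -(m : R) else 0 := by
        congr 1
        refine sum_congr rfl fun j hj => ?_
        rw [sum_comm]
        exact sum_congr rfl fun l hl =>
          hω.sum_pow_odd_pow_add_add_one (mem_range.mp hj) (mem_range.mp hl)
    _ = (m : R) ^ 2 := by
        rw [sum_congr rfl fun j _ => sum_ite_eq' (range m) (m - 1 - j) fun _ => -(m : R)]
        rw [sum_congr rfl fun j hj => if_pos (mem_range.mpr (by have := mem_range.mp hj; omega))]
        simp [sq]

end IsPrimitiveRoot

namespace Complex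

theorem four_mul_exp_mul_sin_sq (θ : ℂ) :
    4 * exp (2 * θ * I) * sin θ ^ 2 = -(1 - exp (2 * θ * I)) ^ 2 := by
  have hE : exp (θ * I) ≠ 0 := exp_ne_zero _
  rw [sin, neg_mul, exp_neg, mul_assoc 2, two_mul, exp_add]
  field_simp
  linear_combination 4 * (exp (θ * I) ^ 2 - 1) ^ 2 * I_sq

theorem one_div_sin_sq_eq_of_exp_pow_eq_neg_one (θ : ℂ) {m : ℕ} (h : exp (2 * θ * I) ^ m = -1) :
    1 / sin θ ^ 2 = -(exp (2 * θ * I) * (∑ j ∈ range m, exp (2 * θ * I) ^ j) ^ 2) := by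
  set ζ := exp (2 * θ * I)
  set g := ∑ j ∈ range m, ζ ^ j
  have hgeom : (1 - ζ) * g = 2 := by rw [mul_neg_geom_sum, h]; ring
  refine (eq_one_div_of_mul_eq_one_left ?_).symm
  linear_combination (-g ^ 2 / 4) * four_mul_exp_mul_sin_sq θ + ((1 - ζ) * g + 2) / 4 * hgeom

end Complex

open Real

theorem Real.sum_range_one_div_sin_sq_odd_mul_pi_div (m : ℕ) :
    ∑ k ∈ range m, 1 / sin ((2 * k + 1) * π / (2 * m)) ^ 2 = (m : ℝ) ^ 2 := by
  rcases eq_or_ne m 0 with rfl | hm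
  · simp
  have hω : IsPrimitiveRoot (Complex.exp (π * Complex.I / m)) (2 * m) := by
    convert Complex.isPrimitiveRoot_exp (2 * m) (by positivity) using 2
    push_cast
    field_simp
  have hexp (k : ℕ) : Complex.exp (2 * ((2 * k + 1) * π / (2 * m) : ℂ) * Complex.I)
      = Complex.exp (π * Complex.I / m) ^ (2 * k + 1) := by
    rw [← Complex.exp_nat_mul]
    congr 1
    push_cast
    field_simp
  apply Complex.ofReal_injective
  push_cast
  rw [← hω.sum_neg_mul_geom_sum_sq]
  refine sum_congr rfl fun k _ => ?_
  rw [Complex.one_div_sin_sq_eq_of_exp_pow_eq_neg_one _ (hexp k ▸ hω.pow_odd_pow_half hm k), hexp]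

theorem Finset.sum_range_two_mul_of_reflect {M : Type*} [AddCommMonoid M] (f : ℕ → M) (n : ℕ)
    (hf : ∀ k < n, f (2 * n - 1 - k) = f k) :
    ∑ k ∈ range (2 * n), f k = 2 • ∑ k ∈ range n, f k := by
  rw [two_mul, sum_range_add, ← sum_range_reflect (fun k => f (n + k)), two_nsmul]
  congr 1
  refine sum_congr rfl fun k hk => ?_
  have hk := mem_range.mp hk
  rw [show n + (n - 1 - k) = 2 * n - 1 - k by omega, hf k hk]

theorem Real.sin_odd_mul_pi_div_reflect {m k : ℕ} (hk : k < m) :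
    sin ((2 * (m - 1 - k : ℕ) + 1) * π / (2 * m)) = sin ((2 * k + 1) * π / (2 * m)) := by
  have hm : (m : ℝ) ≠ 0 := Nat.cast_ne_zero.mpr (by omega)
  rw [← sin_pi_sub, Nat.cast_sub (by omega), Nat.cast_sub (by omega)]
  congr 1
  field_simp
  push_cast
  ring

theorem sum_inv_sin_sq_odd (N : ℕ) (hN4 : 4 ∣ N) :
    ∑ s ∈ Finset.Icc 1 (N / 4),
        1 / Real.sin ((2 * (s : ℝ) - 1) * Real.pi / N) ^ 2
      = (N : ℝ) ^ 2 / 8 := by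
  obtain ⟨n, rfl⟩ := hN4
  set f : ℕ → ℝ := fun k => 1 / sin ((2 * k + 1) * π / (2 * (2 * n : ℕ))) ^ 2 with hf
  have hshift : ∑ s ∈ Icc 1 (4 * n / 4), 1 / sin ((2 * (s : ℝ) - 1) * π / (4 * n : ℕ)) ^ 2
      = ∑ k ∈ range n, f k := by
    rw [Nat.mul_div_cancel_left n four_pos, ← Ico_add_one_right_eq_Icc, sum_Ico_eq_sum_range]
    refine sum_congr rfl fun k _ => ?_
    simp only [hf]
    push_cast
    ring_nf
  have hfull := sum_range_two_mul_of_reflect f n fun k hk => by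
    simp only [hf, Real.sin_odd_mul_pi_div_reflect (show k < 2 * n by omega)]
  rw [Real.sum_range_one_div_sin_sq_odd_mul_pi_div, nsmul_eq_mul] at hfull
  rw [hshift]
  push_cast at hfull ⊢
  linarith
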